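/- Let (X, Y) be jointly distributed with regular conditional CDF G_x(·) of Y given X = x, and let F : X × ℝ → [0,1] assign a CDF F_x to each x. Then E_{X,Y}[CRPS(F_X, Y)] is minimized over measurable families {F_x} at F_x = G_x for P_X-almost every x, with minimum E_X ∫_ℝ G_X(z)(1 − G_X(z)) dz. -/

import Mathlib

/-!
Averaging over `y ~ μ` the squared distance between a number `c` and the indicator
`1{y ≤ z}` gives the bias–variance split `(c - G z)² + G z (1 - G z)`, where `G` is the
CDF of `μ`. Integrating in `z` (Fubini) turns the expected CRPS of a forecast `F` into
`‖F - G‖²_{L²} + ∫ G (1 - G)`, so the expected score exceeds its value at `G` by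
`E_X ‖F_X - G_X‖²`, which vanishes exactly when `F_X = G_X` almost everywhere.
-/

open MeasureTheory Set ProbabilityTheory

noncomputable def crps (F : ℝ → ℝ) (y : ℝ) : ℝ :=
  ∫ z, (F z - if y ≤ z then (1 : ℝ) else 0) ^ 2

lemma integral_sq_sub_indicator_one {Ω : Type*} [MeasurableSpace Ω] (μ : Measure Ω)
    [IsProbabilityMeasure μ] {s : Set Ω} (hs : MeasurableSet s) (c : ℝ) :
    ∫ ω, (c - s.indicator 1 ω) ^ 2 ∂μ
      = (c - μ.real s) ^ 2 + μ.real s * (1 - μ.real s) := by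
  have hpoint : ∀ ω, (c - s.indicator 1 ω) ^ 2 = c ^ 2 + (1 - 2 * c) * s.indicator 1 ω := by
    intro ω
    by_cases hω : ω ∈ s
    · simp [hω]; ring
    · simp [hω]
  have hind : Integrable (s.indicator (1 : Ω → ℝ)) μ := (integrable_const 1).indicator hs
  simp_rw [hpoint]
  rw [integral_add (integrable_const _) (hind.const_mul _), integral_const, integral_const_mul,
    integral_indicator_one hs, probReal_univ, one_smul]
  ring

lemma ite_le_eq_indicator_Iic (y z : ℝ) :
    (if y ≤ z then (1 : ℝ) else 0) = (Iic z).indicator 1 y := by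
  simp [indicator_apply]

lemma integral_sq_sub_ite_le (μ : Measure ℝ) [IsProbabilityMeasure μ] (c z : ℝ) :
    ∫ y, (c - if y ≤ z then (1 : ℝ) else 0) ^ 2 ∂μ
      = (c - cdf μ z) ^ 2 + cdf μ z * (1 - cdf μ z) := by
  simp_rw [ite_le_eq_indicator_Iic, cdf_eq_real]
  exact integral_sq_sub_indicator_one μ measurableSet_Iic c

lemma measurable_ite_le : Measurable fun p : ℝ × ℝ => if p.1 ≤ p.2 then (1 : ℝ) else 0 :=
  Measurable.ite (measurableSet_le measurable_fst measurable_snd) measurable_const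
    measurable_const

lemma integrable_cdf_sub_ite_le_sq (μ : Measure ℝ) [IsProbabilityMeasure μ]
    (hG : Integrable fun z => cdf μ z * (1 - cdf μ z)) :
    Integrable (fun p : ℝ × ℝ => (cdf μ p.2 - if p.1 ≤ p.2 then (1 : ℝ) else 0) ^ 2)
      (μ.prod volume) := by
  have hmeas :
      Measurable fun p : ℝ × ℝ => (cdf μ p.2 - if p.1 ≤ p.2 then (1 : ℝ) else 0) ^ 2 :=
    (((cdf μ).mono.measurable.comp measurable_snd).sub measurable_ite_le).pow_const 2
  refine (integrable_prod_iff' hmeas.aestronglyMeasurable).2 ⟨?_, ?_⟩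
  · refine ae_of_all _ fun z => (integrable_const (1 : ℝ)).mono'
      (hmeas.comp measurable_prodMk_right).aestronglyMeasurable (ae_of_all _ fun y => ?_)
    have h0 := cdf_nonneg μ z
    have h1 := cdf_le_one μ z
    rw [Real.norm_of_nonneg (sq_nonneg _)]
    split_ifs <;> nlinarith
  · simpa [Real.norm_of_nonneg (sq_nonneg _), integral_sq_sub_ite_le] using hG

lemma integrable_sq_sub_ite_le (μ : Measure ℝ) [IsProbabilityMeasure μ] {F : ℝ → ℝ}
    (hF : Measurable F) (hFG : Integrable fun z => (F z - cdf μ z) ^ 2)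
    (hG : Integrable fun z => cdf μ z * (1 - cdf μ z)) :
    Integrable (fun p : ℝ × ℝ => (F p.2 - if p.1 ≤ p.2 then (1 : ℝ) else 0) ^ 2)
      (μ.prod volume) := by
  have hdom :=
    ((hFG.comp_snd μ).const_mul 2).add ((integrable_cdf_sub_ite_le_sq μ hG).const_mul 2)
  refine hdom.mono'
    (((hF.comp measurable_snd).sub measurable_ite_le).pow_const 2).aestronglyMeasurable
    (ae_of_all _ fun p => ?_)
  rw [Real.norm_of_nonneg (sq_nonneg _), Pi.add_apply]
  nlinarith [sq_nonneg (F p.2 - 2 * cdf μ p.2 + if p.1 ≤ p.2 then (1 : ℝ) else 0)]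

lemma integral_crps_eq (μ : Measure ℝ) [IsProbabilityMeasure μ] {F : ℝ → ℝ}
    (hF : Measurable F) (hFG : Integrable fun z => (F z - cdf μ z) ^ 2)
    (hG : Integrable fun z => cdf μ z * (1 - cdf μ z)) :
    ∫ y, crps F y ∂μ = (∫ z, (F z - cdf μ z) ^ 2) + ∫ z, cdf μ z * (1 - cdf μ z) := by
  calc ∫ y, crps F y ∂μ
      = ∫ z, ∫ y, (F z - if y ≤ z then (1 : ℝ) else 0) ^ 2 ∂μ :=
        integral_integral_swap (integrable_sq_sub_ite_le μ hF hFG hG)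
    _ = ∫ z, ((F z - cdf μ z) ^ 2 + cdf μ z * (1 - cdf μ z)) := by
        simp_rw [integral_sq_sub_ite_le]
    _ = _ := integral_add hFG hG

lemma integral_integral_crps_eq {𝒳 : Type*} [MeasurableSpace 𝒳] (ν : Measure 𝒳)
    (κ : Kernel 𝒳 ℝ) [IsMarkovKernel κ] {F : 𝒳 → ℝ → ℝ} (hF : ∀ x, Measurable (F x))
    (hFG : ∀ᵐ x ∂ν, Integrable fun z => (F x z - cdf (κ x) z) ^ 2)
    (hFG' : Integrable (fun x => ∫ z, (F x z - cdf (κ x) z) ^ 2) ν)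
    (hG : ∀ᵐ x ∂ν, Integrable fun z => cdf (κ x) z * (1 - cdf (κ x) z))
    (hG' : Integrable (fun x => ∫ z, cdf (κ x) z * (1 - cdf (κ x) z)) ν) :
    ∫ x, ∫ y, crps (F x) y ∂κ x ∂ν
      = (∫ x, (∫ z, (F x z - cdf (κ x) z) ^ 2) ∂ν)
        + ∫ x, (∫ z, cdf (κ x) z * (1 - cdf (κ x) z)) ∂ν := by
  rw [← integral_add hFG' hG']
  exact integral_congr_ae <| (hFG.and hG).mono fun x ⟨hx, hx'⟩ =>
    integral_crps_eq (κ x) (hF x) hx hx'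

lemma integral_sq_sub_eq_zero_iff {α : Type*} [MeasurableSpace α] {μ : Measure α}
    {f g : α → ℝ} (h : Integrable (fun a => (f a - g a) ^ 2) μ) :
    ∫ a, (f a - g a) ^ 2 ∂μ = 0 ↔ f =ᵐ[μ] g := by
  rw [integral_eq_zero_iff_of_nonneg (fun a => sq_nonneg _) h]
  refine Filter.eventually_congr (ae_of_all _ fun a => ?_)
  simp [sub_eq_zero]

lemma integral_integral_sq_sub_eq_zero_iff {α β : Type*} [MeasurableSpace α] [MeasurableSpace β]
    {ν : Measure α} {μ : Measure β} {f g : α → β → ℝ}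
    (h : ∀ᵐ x ∂ν, Integrable (fun z => (f x z - g x z) ^ 2) μ)
    (h' : Integrable (fun x => ∫ z, (f x z - g x z) ^ 2 ∂μ) ν) :
    ∫ x, ∫ z, (f x z - g x z) ^ 2 ∂μ ∂ν = 0 ↔ ∀ᵐ x ∂ν, f x =ᵐ[μ] g x := by
  rw [integral_eq_zero_iff_of_nonneg (fun x => integral_nonneg fun z => sq_nonneg _) h']
  refine Filter.eventually_congr (h.mono fun x hx => ?_)
  exact integral_sq_sub_eq_zero_iff hx

/-- With `ν` the law of `X` and `κ x` the conditional law of `Y` given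
`X = x` (with conditional CDF `G x`), the expected CRPS over measurable families of
CDFs `x ↦ F x` is minimized at `F = G` (i.e. `F x = G x` for `ν`-a.e. `x`), with
minimum value `E_X ∫ G_X (1 - G_X)`. -/
theorem expected_conditional_crps_minimized_at_posterior
    {𝒳 : Type*} [MeasurableSpace 𝒳]
    (ν : Measure 𝒳) [IsProbabilityMeasure ν]
    (κ : Kernel 𝒳 ℝ) [IsMarkovKernel κ]
    (G : 𝒳 → ℝ → ℝ)
    (hG : ∀ x z, G x z = (κ x (Iic z)).toReal)
    (hGint : ∀ᵐ x ∂ν, Integrable (fun z => G x z * (1 - G x z)))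
    (hGint' : Integrable (fun x => ∫ z, G x z * (1 - G x z)) ν) :
    (∫ x, (∫ y, (∫ z, (G x z - if y ≤ z then (1 : ℝ) else 0) ^ 2) ∂(κ x)) ∂ν
        = ∫ x, (∫ z, G x z * (1 - G x z)) ∂ν)
    ∧ (∀ F : 𝒳 → ℝ → ℝ,
        Measurable (Function.uncurry F) →
        (∀ x, Monotone (F x)) →
        (∀ x z, F x z ∈ Icc (0 : ℝ) 1) →
        (∀ᵐ x ∂ν, Integrable (fun z => (F x z - G x z) ^ 2)) →
        Integrable (fun x => ∫ z, (F x z - G x z) ^ 2) ν →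
        (∫ x, (∫ y, (∫ z, (G x z - if y ≤ z then (1 : ℝ) else 0) ^ 2) ∂(κ x)) ∂ν
            ≤ ∫ x, (∫ y, (∫ z, (F x z - if y ≤ z then (1 : ℝ) else 0) ^ 2) ∂(κ x)) ∂ν)
        ∧ ((∫ x, (∫ y, (∫ z, (F x z - if y ≤ z then (1 : ℝ) else 0) ^ 2) ∂(κ x)) ∂ν
              = ∫ x, (∫ y, (∫ z, (G x z - if y ≤ z then (1 : ℝ) else 0) ^ 2) ∂(κ x)) ∂ν)
            ↔ ∀ᵐ x ∂ν, F x =ᵐ[volume] G x)) := by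
  obtain rfl : G = fun x => ⇑(cdf (κ x)) :=
    funext₂ fun x z => (hG x z).trans (cdf_eq_real _ z).symm
  have hG_eq := integral_integral_crps_eq ν κ (fun x => (cdf (κ x)).mono.measurable)
    (ae_of_all _ fun x => by simp) (by simp) hGint hGint'
  simp only [sub_self, zero_pow two_ne_zero, integral_zero, zero_add] at hG_eq
  refine ⟨hG_eq, fun F _ hFmono _ hFG hFG' => ?_⟩
  have hF_eq :=
    integral_integral_crps_eq ν κ (fun x => (hFmono x).measurable) hFG hFG' hGint hGint'
  have hdist_nonneg : 0 ≤ ∫ x, (∫ z, (F x z - cdf (κ x) z) ^ 2) ∂ν :=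
    integral_nonneg fun x => integral_nonneg fun z => sq_nonneg _
  change ∫ x, ∫ y, crps _ y ∂κ x ∂ν ≤ ∫ x, ∫ y, crps (F x) y ∂κ x ∂ν ∧
    (∫ x, ∫ y, crps (F x) y ∂κ x ∂ν = ∫ x, ∫ y, crps _ y ∂κ x ∂ν ↔ _)
  rw [hF_eq, hG_eq, ← integral_integral_sq_sub_eq_zero_iff hFG hFG']
  constructor
  · linarith
  · constructor <;> intro h <;> linarith
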